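/- Fix γ > 0. For each integer k ≥ 1 the function ψ^(k)(z) = ((1+z)/2)·exp(γ(z−1)/(1+z+1/k)) is analytic on a neighborhood of the closed unit disk and satisfies exp((1/2π)∫_{−π}^{π} log|ψ^(k)(e^{−iλ})|² dλ) = (1/4)·exp(−2γk/(k+1)). Moreover, the limiting policy ψ^∞, with boundary values ψ^∞(e^{−iλ}) = ((1+e^{−iλ})/2)·exp(−iγ·tan(λ/2)), satisfies exp((1/2π)∫_{−π}^{π} log|ψ^∞(e^{−iλ})|² dλ) = 1/4. Hence lim_{k→∞} σ_S²(ψ^(k)) = e^{−2γ}/4 < 1/4 = σ_S²(ψ^∞): the supplier's mean squared forecast error jumps upward at the limiting policy, so ψ^∞ is strictly suboptimal while the sequence ψ^(k) is ε-optimal. -/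

import Mathlib

open MeasureTheory intervalIntegral

/-- The ε-optimal policy `ψ^(k)(z) = ((1+z)/2)·exp(γ(z−1)/(1+z+1/k))`. -/
noncomputable def psiK (γ : ℝ) (k : ℕ) : ℂ → ℂ :=
  fun z => ((1 + z) / 2) * Complex.exp ((γ : ℂ) * (z - 1) / (1 + z + 1 / (k : ℂ)))

/-- Boundary values of the limiting policy `ψ^∞`. -/
noncomputable def psiInfBdy (γ : ℝ) : ℝ → ℂ := fun l =>
  ((1 + Complex.exp (-Complex.I * l)) / 2) *
    Complex.exp (-Complex.I * (γ : ℂ) * (Real.tan (l / 2) : ℂ))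

/-- Supplier's MSFE of a circle function via Kolmogorov's formula. -/
noncomputable def sigmaS2c (F : ℝ → ℂ) : ℝ :=
  Real.exp ((1 / (2 * Real.pi)) * ∫ l in (-Real.pi)..Real.pi, Real.log (‖F l‖ ^ 2))

/-!
Kolmogorov's formula is `exp (2 ⨍ log |f|)` over the unit circle. For `f` analytic on the closed
disc with no zeros in the open disc, Jensen's formula gives `⨍ log |f| = log |f 0|`: zeros on the
circle itself contribute `log 1 = 0`. So `σ_S²(f) = |f 0|²`. Both `ψ^(k)` and `(1+z)/2` are of
this kind (their only zero is `z = -1`), giving `|ψ^(k)(0)|² = e^{−2γk/(k+1)}/4` and `1/4`; and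
the boundary values of `ψ^∞` have the same modulus as `(1+z)/2`. The jump is the singular inner
factor of `ψ^∞`: invisible on the circle, yet of modulus `e^{−γ}` at the centre.
-/

open Real Metric Filter Topology

theorem AnalyticOnNhd.circleAverage_log_norm_of_ne_zero_on_ball {c : ℂ} {R : ℝ} {f : ℂ → ℂ}
    (hR : R ≠ 0) (hf : AnalyticOnNhd ℂ f (closedBall c |R|))
    (hf₀ : ∀ u ∈ ball c |R|, f u ≠ 0) :
    circleAverage (fun z ↦ Real.log ‖f z‖) c R = Real.log ‖f c‖ := by
  rw [hf.circleAverage_log_norm hR (hf₀ c (mem_ball_self (abs_pos.2 hR))),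
    finsum_eq_zero_of_forall_eq_zero, zero_add]
  intro u
  by_cases hu : u ∈ closedBall c |R|
  · rcases (mem_closedBall.1 hu).lt_or_eq with hlt | heq
    · rw [MeromorphicOn.AnalyticOnNhd.divisor_apply hf hu,
        (hf u hu).analyticOrderAt_eq_zero.2 (hf₀ u (mem_ball.2 hlt))]
      simp
    · rw [dist_comm, dist_eq_norm] at heq
      rw [heq, ← log_abs, abs_mul, abs_inv, abs_abs, mul_inv_cancel₀ (abs_ne_zero.2 hR), log_one,
        mul_zero]
  · simp [hu]

theorem circleAverage_eq_integral_neg_pi_pi (g : ℂ → ℝ) :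
    circleAverage g 0 1 = (2 * π)⁻¹ * ∫ θ in -π..π, g (Complex.exp (-Complex.I * θ)) := by
  have hshift : circleAverage g 0 1 = (2 * π)⁻¹ * ∫ θ in -π..π, g (circleMap 0 1 θ) := by
    rw [circleAverage_eq_integral_add (-π), smul_eq_mul,
      intervalIntegral.integral_comp_add_right (fun θ ↦ g (circleMap 0 1 θ))]
    norm_num [two_mul]
  rw [hshift, ← neg_neg π, ← intervalIntegral.integral_comp_neg, neg_neg]
  congr 1
  refine intervalIntegral.integral_congr fun θ _ ↦ ?_
  simp [circleMap, mul_comm]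

theorem sigmaS2c_comp_exp (f : ℂ → ℂ) :
    sigmaS2c (fun l ↦ f (Complex.exp (-Complex.I * l))) =
      exp (2 * circleAverage (fun z ↦ Real.log ‖f z‖) 0 1) := by
  simp only [sigmaS2c, circleAverage_eq_integral_neg_pi_pi, Real.log_pow,
    intervalIntegral.integral_const_mul]
  congr 1
  push_cast
  ring

theorem sigmaS2c_comp_exp_of_analyticOnNhd {f : ℂ → ℂ}
    (hf : AnalyticOnNhd ℂ f (closedBall 0 1)) (hf₀ : ∀ z ∈ ball (0 : ℂ) 1, f z ≠ 0) :
    sigmaS2c (fun l ↦ f (Complex.exp (-Complex.I * l))) = ‖f 0‖ ^ 2 := by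
  rw [← abs_one] at hf hf₀
  have hpos : 0 < ‖f 0‖ := norm_pos_iff.2 (hf₀ 0 (mem_ball_self (by norm_num)))
  rw [sigmaS2c_comp_exp, hf.circleAverage_log_norm_of_ne_zero_on_ball one_ne_zero hf₀,
    ← Real.log_rpow hpos, Real.exp_log (by positivity)]
  norm_cast

theorem sigmaS2c_congr_norm {F G : ℝ → ℂ} (h : ∀ l, ‖F l‖ = ‖G l‖) :
    sigmaS2c F = sigmaS2c G := by
  simp only [sigmaS2c, h]

theorem one_add_ne_zero_of_norm_lt_one {z : ℂ} (hz : ‖z‖ < 1) : 1 + z ≠ 0 := fun h ↦ by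
  rw [show z = -1 by linear_combination h] at hz
  simp at hz

theorem analyticOnNhd_psiK (γ : ℝ) (k : ℕ) :
    AnalyticOnNhd ℂ (psiK γ k) {-(1 + 1 / (k : ℂ))}ᶜ := by
  refine DifferentiableOn.analyticOnNhd ?_ isOpen_compl_singleton
  intro z hz
  have hden : 1 + z + 1 / (k : ℂ) ≠ 0 := fun h ↦
    hz (Set.mem_singleton_iff.2 (by linear_combination h))
  unfold psiK
  fun_prop (disch := exact hden)

theorem closedBall_subset_compl_pole {k : ℕ} (hk : k ≠ 0) :
    closedBall (0 : ℂ) 1 ⊆ {-(1 + 1 / (k : ℂ))}ᶜ := by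
  intro z hz hpole
  have hnorm : ‖z‖ = 1 + 1 / (k : ℝ) := by
    rw [Set.mem_singleton_iff.1 hpole, norm_neg,
      ← Complex.norm_of_nonneg (by positivity : (0 : ℝ) ≤ 1 + 1 / k)]
    push_cast
    rfl
  have hk' : (0 : ℝ) < 1 / k := by positivity
  rw [mem_closedBall_zero_iff] at hz
  linarith

theorem psiK_ne_zero (γ : ℝ) (k : ℕ) {z : ℂ} (hz : ‖z‖ < 1) : psiK γ k z ≠ 0 := by
  simp [psiK, one_add_ne_zero_of_norm_lt_one hz, Complex.exp_ne_zero]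

theorem norm_psiK_zero (γ : ℝ) {k : ℕ} (hk : k ≠ 0) :
    ‖psiK γ k 0‖ = exp (-γ * k / (k + 1)) / 2 := by
  have hexponent : (γ : ℂ) * (0 - 1) / (1 + 0 + 1 / (k : ℂ)) = ((-γ * k / (k + 1) : ℝ) : ℂ) := by
    push_cast
    field_simp
    ring
  simp only [psiK]
  rw [hexponent, norm_mul, Complex.norm_exp_ofReal]
  norm_num
  ring

theorem sigmaS2c_psiK (γ : ℝ) {k : ℕ} (hk : k ≠ 0) :
    sigmaS2c (fun l ↦ psiK γ k (Complex.exp (-Complex.I * l))) =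
      1 / 4 * exp (-2 * γ * k / (k + 1)) := by
  rw [sigmaS2c_comp_exp_of_analyticOnNhd
      ((analyticOnNhd_psiK γ k).mono (closedBall_subset_compl_pole hk))
      (fun z hz ↦ psiK_ne_zero γ k (mem_ball_zero_iff.1 hz)),
    norm_psiK_zero γ hk, div_pow, ← Real.exp_nat_mul]
  ring_nf

theorem sigmaS2c_psiInfBdy (γ : ℝ) : sigmaS2c (psiInfBdy γ) = 1 / 4 := by
  have hinner (l : ℝ) : ‖Complex.exp (-Complex.I * γ * (tan (l / 2) : ℂ))‖ = 1 := by
    rw [show -Complex.I * γ * (tan (l / 2) : ℂ) = ((-(γ * tan (l / 2)) : ℝ) : ℂ) * Complex.I by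
      push_cast; ring]
    exact Complex.norm_exp_ofReal_mul_I _
  have houter : AnalyticOnNhd ℂ (fun z : ℂ ↦ (1 + z) / 2) (closedBall 0 1) := fun z _ ↦ by
    fun_prop
  rw [sigmaS2c_congr_norm (G := fun l ↦ (fun z : ℂ ↦ (1 + z) / 2) (Complex.exp (-Complex.I * l)))
      (fun l ↦ by simp only [psiInfBdy, norm_mul, hinner, mul_one]),
    sigmaS2c_comp_exp_of_analyticOnNhd houter fun z hz ↦
      div_ne_zero (one_add_ne_zero_of_norm_lt_one (mem_ball_zero_iff.1 hz)) two_ne_zero]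
  norm_num

theorem tendsto_sigmaS2c_psiK (γ : ℝ) :
    Tendsto (fun k : ℕ ↦ sigmaS2c (fun l ↦ psiK γ k (Complex.exp (-Complex.I * l))))
      atTop (𝓝 (exp (-2 * γ) / 4)) := by
  have hratio : Tendsto (fun k : ℕ ↦ -2 * γ * (k / (k + 1 : ℝ))) atTop (𝓝 (-2 * γ * 1)) :=
    (tendsto_natCast_div_add_atTop 1).const_mul _
  have hlim := ((continuous_exp.tendsto _).comp hratio).const_mul (1 / 4)
  rw [mul_one, one_div_mul_eq_div] at hlim
  refine hlim.congr' ((eventually_ne_atTop 0).mono fun k hk ↦ ?_)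
  simp only [Function.comp_apply, sigmaS2c_psiK γ hk, mul_div_assoc]

/-- Each `ψ^(k)` is analytic near the closed unit disk with
`σ_S²(ψ^(k)) = (1/4)e^{−2γk/(k+1)}`, the limiting policy has `σ_S²(ψ^∞) = 1/4`,
and `lim_k σ_S²(ψ^(k)) = e^{−2γ}/4 < 1/4 = σ_S²(ψ^∞)`: the supplier's forecast
error jumps upward at the limit. -/
theorem stmt_18 (γ : ℝ) (hγ : 0 < γ) :
    (∀ k : ℕ, 1 ≤ k →
      (∃ U : Set ℂ, IsOpen U ∧ Metric.closedBall (0 : ℂ) 1 ⊆ U ∧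
        AnalyticOnNhd ℂ (psiK γ k) U) ∧
      sigmaS2c (fun l => psiK γ k (Complex.exp (-Complex.I * l))) =
        (1 / 4) * Real.exp (-2 * γ * k / (k + 1))) ∧
    sigmaS2c (psiInfBdy γ) = 1 / 4 ∧
    Filter.Tendsto (fun k : ℕ => sigmaS2c (fun l => psiK γ k (Complex.exp (-Complex.I * l))))
      Filter.atTop (nhds (Real.exp (-2 * γ) / 4)) ∧
    Real.exp (-2 * γ) / 4 < 1 / 4 := by
  refine ⟨fun k hk ↦ ?_, sigmaS2c_psiInfBdy γ, tendsto_sigmaS2c_psiK γ, ?_⟩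
  · have hk₀ : k ≠ 0 := Nat.one_le_iff_ne_zero.1 hk
    exact ⟨⟨_, isOpen_compl_singleton, closedBall_subset_compl_pole hk₀, analyticOnNhd_psiK γ k⟩,
      sigmaS2c_psiK γ hk₀⟩
  · have : exp (-2 * γ) < 1 := exp_lt_one_iff.2 (by linarith)
    linarith
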